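/- arXiv:math/0410477 — 2 statements merged into one kernel-verified Lean document; each statement's English description precedes it below -/
import Mathlib

section
/- For every integer n ≥ 1, ⌊n!/e⌋ ≡ -δ_{n-1} (mod n), where δ_{n-1} = 0 if n-1 is odd and δ_{n-1} = 1 if n-1 is even. -/
/-!
Writing `D n` for the subfactorial, `D n = n! * ∑_{k ≤ n} (-1)^k / k!`, so `n!/e - D n` is `n!`
times the tail of the alternating series of `e⁻¹`. That tail has the sign of `(-1)^(n+1)` and
absolute value below `1/(n+1)!`, hence `⌊n!/e⌋` is `D n - 1` for even `n` and `D n` for odd `n`.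
The recurrence `D n = n * D (n-1) + (-1)^n` gives `D n ≡ (-1)^n [ZMOD n]`.
-/

open Finset Filter Topology Nat

noncomputable def expNegOnePartialSum (N : ℕ) : ℝ :=
  ∑ k ∈ range N, (-1) ^ k * (k ! : ℝ)⁻¹

lemma expNegOnePartialSum_succ (N : ℕ) :
    expNegOnePartialSum (N + 1) = expNegOnePartialSum N + (-1) ^ N * (N ! : ℝ)⁻¹ :=
  sum_range_succ _ _

lemma tendsto_expNegOnePartialSum :
    Tendsto expNegOnePartialSum atTop (𝓝 (Real.exp (-1))) := by
  have h : HasSum (fun k : ℕ => (-1 : ℝ) ^ k / k !) (Real.exp (-1)) := by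
    rw [Real.exp_eq_exp_ℝ]
    exact NormedSpace.expSeries_div_hasSum_exp (-1 : ℝ)
  simp only [div_eq_mul_inv] at h
  exact h.tendsto_sum_nat

lemma antitone_inv_factorial : Antitone fun k : ℕ => (k ! : ℝ)⁻¹ := fun _ _ hab =>
  inv_anti₀ (by positivity) (by exact_mod_cast factorial_le hab)

lemma expNegOnePartialSum_le_of_even {N : ℕ} (hN : Even N) :
    expNegOnePartialSum N ≤ Real.exp (-1) := by
  obtain ⟨k, rfl⟩ := hN
  rw [← two_mul]
  exact antitone_inv_factorial.alternating_series_le_tendsto tendsto_expNegOnePartialSum k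

lemma le_expNegOnePartialSum_of_odd {N : ℕ} (hN : Odd N) :
    Real.exp (-1) ≤ expNegOnePartialSum N := by
  obtain ⟨k, rfl⟩ := hN
  exact antitone_inv_factorial.tendsto_le_alternating_series tendsto_expNegOnePartialSum k

lemma factorial_mul_inv_factorial_succ (n : ℕ) :
    (n ! : ℝ) * ((n + 1) ! : ℝ)⁻¹ = ((n : ℝ) + 1)⁻¹ := by
  rw [factorial_succ]
  push_cast
  field_simp

lemma numDerangements_eq_factorial_mul_expNegOnePartialSum (n : ℕ) :
    (numDerangements n : ℝ) = n ! * expNegOnePartialSum (n + 1) := by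
  induction n with
  | zero => simp [expNegOnePartialSum]
  | succ n ih =>
    have hD : (numDerangements (n + 1) : ℝ) = (n + 1) * numDerangements n - (-1) ^ n := by
      exact_mod_cast numDerangements_succ n
    rw [hD, ih, expNegOnePartialSum_succ (n + 1), factorial_succ]
    push_cast
    field_simp
    ring

lemma factorial_mul_exp_neg_one_mem_Ico_of_even {n : ℕ} (hn : Even n) :
    (numDerangements n : ℝ) - 1 ≤ n ! * Real.exp (-1) ∧
      n ! * Real.exp (-1) < numDerangements n := by
  have hfac : (0 : ℝ) < n ! := by positivity
  have hD := numDerangements_eq_factorial_mul_expNegOnePartialSum n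
  have hstep : (n ! : ℝ) * ((n + 1) ! : ℝ)⁻¹ ≤ 1 := by
    rw [factorial_mul_inv_factorial_succ]
    exact inv_le_one_of_one_le₀ (le_add_of_nonneg_left n.cast_nonneg)
  -- the strict upper bound needs the next two terms of the series
  have hgap : 0 < (n ! : ℝ) * (((n + 1) ! : ℝ)⁻¹ - ((n + 1 + 1) ! : ℝ)⁻¹) :=
    mul_pos hfac <| sub_pos.mpr <| inv_strictAnti₀ (by positivity) <| by
      exact_mod_cast factorial_lt_of_lt n.succ_pos (n + 1).lt_succ_self
  constructor
  · calc (numDerangements n : ℝ) - 1 ≤ numDerangements n - n ! * ((n + 1) ! : ℝ)⁻¹ := by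
          linarith
      _ = n ! * expNegOnePartialSum (n + 1 + 1) := by
          rw [hD, expNegOnePartialSum_succ (n + 1), hn.add_one.neg_one_pow]; ring
      _ ≤ n ! * Real.exp (-1) :=
          mul_le_mul_of_nonneg_left (expNegOnePartialSum_le_of_even (hn.add even_two)) hfac.le
  · calc (n ! : ℝ) * Real.exp (-1) ≤ n ! * expNegOnePartialSum (n + 1 + 1 + 1) :=
          mul_le_mul_of_nonneg_left
            (le_expNegOnePartialSum_of_odd hn.add_one.add_one.add_one) hfac.le
      _ = numDerangements n - n ! * (((n + 1) ! : ℝ)⁻¹ - ((n + 1 + 1) ! : ℝ)⁻¹) := by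
          rw [hD, expNegOnePartialSum_succ (n + 1 + 1), expNegOnePartialSum_succ (n + 1),
            hn.add_one.neg_one_pow, hn.add_one.add_one.neg_one_pow]
          ring
      _ < numDerangements n := by linarith

lemma factorial_mul_exp_neg_one_mem_Ico_of_odd {n : ℕ} (hn : Odd n) :
    (numDerangements n : ℝ) ≤ n ! * Real.exp (-1) ∧
      n ! * Real.exp (-1) < numDerangements n + 1 := by
  have hfac : (0 : ℝ) < n ! := by positivity
  have hD := numDerangements_eq_factorial_mul_expNegOnePartialSum n
  have hstep : (n ! : ℝ) * ((n + 1) ! : ℝ)⁻¹ < 1 := by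
    rw [factorial_mul_inv_factorial_succ]
    exact inv_lt_one_of_one_lt₀ (by simpa using hn.pos)
  constructor
  · calc (numDerangements n : ℝ) = n ! * expNegOnePartialSum (n + 1) := hD
      _ ≤ n ! * Real.exp (-1) :=
          mul_le_mul_of_nonneg_left (expNegOnePartialSum_le_of_even hn.add_one) hfac.le
  · calc (n ! : ℝ) * Real.exp (-1) ≤ n ! * expNegOnePartialSum (n + 1 + 1) :=
          mul_le_mul_of_nonneg_left (le_expNegOnePartialSum_of_odd hn.add_one.add_one) hfac.le
      _ = numDerangements n + n ! * ((n + 1) ! : ℝ)⁻¹ := by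
          rw [hD, expNegOnePartialSum_succ (n + 1), hn.add_one.neg_one_pow]; ring
      _ < numDerangements n + 1 := by linarith

lemma floor_factorial_mul_exp_neg_one (n : ℕ) :
    ⌊(n ! : ℝ) * Real.exp (-1)⌋ = numDerangements n - if Even n then 1 else 0 := by
  rw [Int.floor_eq_iff]
  rcases n.even_or_odd with hn | hn
  · simpa [hn] using factorial_mul_exp_neg_one_mem_Ico_of_even hn
  · simpa [Nat.not_even_iff_odd.mpr hn] using factorial_mul_exp_neg_one_mem_Ico_of_odd hn

lemma numDerangements_modEq_neg_one_pow (n : ℕ) :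
    (numDerangements n : ℤ) ≡ (-1) ^ n [ZMOD n] := by
  cases n with
  | zero => rfl
  | succ m =>
    exact Int.modEq_iff_dvd.mpr ⟨-numDerangements m, by
      rw [numDerangements_succ]; push_cast; ring⟩

theorem floor_factorial_div_e_congr (n : ℕ) (hn : 1 ≤ n) :
    ⌊(n.factorial : ℝ) / Real.exp 1⌋ ≡ -(if Even (n - 1) then 1 else 0) [ZMOD n] := by
  have hfloor : ⌊(n.factorial : ℝ) / Real.exp 1⌋ =
      numDerangements n - if Even n then 1 else 0 := by
    rw [div_eq_mul_inv, ← Real.exp_neg]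
    exact floor_factorial_mul_exp_neg_one n
  have hsign : ((-1) ^ n - if Even n then 1 else 0 : ℤ) = -(if Even (n - 1) then 1 else 0) := by
    rcases n.even_or_odd with hn' | hn'
    · simp [hn', hn'.neg_one_pow, Nat.even_sub hn]
    · simp [hn'.neg_one_pow, Nat.not_even_iff_odd.mpr hn', Nat.even_sub hn]
  rw [hfloor, ← hsign]
  exact (numDerangements_modEq_neg_one_pow n).sub_right _
end

section
/- Let p be a prime and n a positive integer with n ≢ -2 (mod p) and p | K(n). Then p does not divide K(n+1), K(n+2), and K(n+3). -/
/-- Kurepa's left factorial. -/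
def K (n : ℕ) : ℕ := ∑ k ∈ Finset.range n, k.factorial

open Nat

theorem factorial_add_factorial_succ (n : ℕ) : n ! + (n + 1)! = (n + 2) * n ! := by
  rw [factorial_succ]
  ring

theorem factorial_add_factorial_succ_add_factorial_add_two (n : ℕ) :
    n ! + (n + 1)! + (n + 2)! = (n + 2) ^ 2 * n ! := by
  rw [factorial_add_factorial_succ, factorial_succ (n + 1), factorial_succ n]
  ring

theorem K_succ (n : ℕ) : K (n + 1) = K n + n ! :=
  Finset.sum_range_succ _ _

theorem K_add_two (n : ℕ) : K (n + 2) = K n + (n + 2) * n ! := by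
  rw [K_succ, K_succ, add_assoc, factorial_add_factorial_succ]

theorem K_add_three (n : ℕ) : K (n + 3) = K n + (n + 2) ^ 2 * n ! := by
  rw [K_succ, K_succ, K_succ, add_assoc, add_assoc, ← add_assoc n !,
    factorial_add_factorial_succ_add_factorial_add_two]

theorem natCast_modEq_neg_two_iff_dvd (p n : ℕ) : (n : ℤ) ≡ -2 [ZMOD p] ↔ p ∣ n + 2 := by
  rw [Int.modEq_iff_dvd, ← dvd_neg, ← Int.natCast_dvd_natCast]
  push_cast
  ring_nf

theorem kurepa_no_close_pairs_general (p n : ℕ) (hp : p.Prime) (hnp : n < p)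
    (hmod : ¬ (n : ℤ) ≡ -2 [ZMOD p]) (hdvd : p ∣ K n) :
    ¬ p ∣ K (n + 1) ∧ ¬ p ∣ K (n + 2) ∧ ¬ p ∣ K (n + 3) := by
  have hfac : ¬ p ∣ n ! := fun h => hnp.not_ge (hp.dvd_factorial.mp h)
  have hn2 : ¬ p ∣ n + 2 := (natCast_modEq_neg_two_iff_dvd p n).not.mp hmod
  rw [K_succ, K_add_two, K_add_three, Nat.dvd_add_right hdvd, Nat.dvd_add_right hdvd,
    Nat.dvd_add_right hdvd, hp.dvd_mul, hp.dvd_mul]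
  exact ⟨hfac, not_or.mpr ⟨hn2, hfac⟩, not_or.mpr ⟨mt hp.dvd_of_dvd_pow hn2, hfac⟩⟩

theorem kurepa_no_close_pairs (p n : ℕ) (hp : p.Prime) (hn0 : 0 < n) (hnp : n < p)
    (hmod : ¬ (n : ℤ) ≡ -2 [ZMOD p]) (hdvd : p ∣ K n) :
    ¬ p ∣ K (n + 1) ∧ ¬ p ∣ K (n + 2) ∧ ¬ p ∣ K (n + 3) :=
  kurepa_no_close_pairs_general p n hp hnp hmod hdvd
end
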